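/- arXiv:1206.1771 — 5 statements merged into one kernel-verified Lean document; each statement's English description precedes it below -/
import Mathlib

section
/- Let b ∈ C¹(ℝ) be 1-periodic. Then for every ε > 0, every interval [α, β] ⊂ ℝ, and every g ∈ C¹([α,β]), | ∫_α^β |b'(t/ε)| g(t) dt − (∫₀¹ |b'(z)| dz) ∫_α^β g(t) dt | ≤ C ε (max_{[α,β]} |g| + ∫_α^β |g'(t)| dt), where C depends only on b. -/
/-!
Subtracting the mean, `h = |b'| - ∫₀¹ |b'|` is a continuous `1`-periodic function of mean zero, so
its primitive `H` is periodic, hence bounded. The function `t ↦ ε H (t / ε)` is then an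
antiderivative of `h (t / ε)` of size `O(ε)`, and one integration by parts against `g` moves the
derivative onto `g` at the cost of boundary terms `O(ε max |g|)` and `O(ε ∫ |g'|)`.
-/

open MeasureTheory Set

namespace Function

theorem Periodic.deriv {F : Type*} [NormedAddCommGroup F] [NormedSpace ℝ F] {f : ℝ → F} {c : ℝ}
    (hf : Periodic f c) : Periodic (deriv f) c := fun x => by
  rw [← deriv_comp_add_const, hf.funext]

theorem Periodic.periodic_primitive_of_integral_eq_zero {f : ℝ → ℝ} {T : ℝ} (hf : Periodic f T)
    (h_int : ∀ t₁ t₂, IntervalIntegrable f volume t₁ t₂) (hzero : ∫ x in (0 : ℝ)..T, f x = 0)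
    (a : ℝ) : Periodic (fun t => ∫ x in a..t, f x) T := fun t => by
  dsimp only
  rw [hf.intervalIntegral_add_eq_add a t h_int, hf.intervalIntegral_add_eq a 0, zero_add, hzero,
    add_zero]

end Function

theorem abs_integral_deriv_mul_le {u u' g g' : ℝ → ℝ} {α β M : ℝ} (hab : α ≤ β)
    (hu : ∀ t ∈ Icc α β, HasDerivAt u (u' t) t) (hg : ∀ t ∈ Icc α β, HasDerivAt g (g' t) t)
    (hu' : IntervalIntegrable u' volume α β) (hg' : IntervalIntegrable g' volume α β)
    (hM : ∀ t ∈ Icc α β, |u t| ≤ M) :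
    |∫ t in α..β, u' t * g t| ≤ M * (|g α| + |g β| + ∫ t in α..β, |g' t|) := by
  rw [← uIcc_of_le hab] at hu hg
  have hparts : ∫ t in α..β, u' t * g t = u β * g β - u α * g α - ∫ t in α..β, u t * g' t := by
    simpa only [mul_comm] using
      intervalIntegral.integral_mul_deriv_eq_deriv_mul hg hu hg' hu'
  have hrem : |∫ t in α..β, u t * g' t| ≤ M * ∫ t in α..β, |g' t| := by
    rw [← intervalIntegral.integral_const_mul]
    refine (Real.norm_eq_abs _).symm.trans_le <| intervalIntegral.norm_integral_le_of_norm_le hab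
      (ae_of_all _ fun t ht => ?_) (hg'.abs.const_mul M)
    rw [Real.norm_eq_abs, abs_mul]
    exact mul_le_mul_of_nonneg_right (hM t (Ioc_subset_Icc_self ht)) (abs_nonneg _)
  have hα := hM α (left_mem_Icc.2 hab)
  have hβ := hM β (right_mem_Icc.2 hab)
  rw [hparts]
  calc |u β * g β - u α * g α - ∫ t in α..β, u t * g' t|
      ≤ |u β| * |g β| + |u α| * |g α| + |∫ t in α..β, u t * g' t| := by
        rw [← abs_mul, ← abs_mul]
        exact (abs_sub _ _).trans (by gcongr; exact abs_sub _ _)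
    _ ≤ M * |g β| + M * |g α| + M * ∫ t in α..β, |g' t| := by gcongr
    _ = M * (|g α| + |g β| + ∫ t in α..β, |g' t|) := by ring

theorem Function.Periodic.exists_abs_integral_comp_div_mul_le {h : ℝ → ℝ} {T : ℝ}
    (hper : Periodic h T) (hT : T ≠ 0) (hcont : Continuous h)
    (hzero : ∫ z in (0 : ℝ)..T, h z = 0) :
    ∃ K ≥ 0, ∀ ε > 0, ∀ α β : ℝ, α ≤ β → ∀ g g' : ℝ → ℝ,
      (∀ t ∈ Icc α β, HasDerivAt g (g' t) t) → IntervalIntegrable g' volume α β →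
      |∫ t in α..β, h (t / ε) * g t| ≤ ε * K * (|g α| + |g β| + ∫ t in α..β, |g' t|) := by
  set H : ℝ → ℝ := fun t => ∫ z in (0 : ℝ)..t, h z
  have hH : ∀ t, HasDerivAt H (h t) t := fun t =>
    (hcont.integral_hasStrictDerivAt 0 t).hasDerivAt
  have hHcont : Continuous H := continuous_iff_continuousAt.2 fun t => (hH t).continuousAt
  have hHper : Periodic H T :=
    hper.periodic_primitive_of_integral_eq_zero hcont.intervalIntegrable hzero 0
  obtain ⟨K, hK⟩ := isBounded_iff_forall_norm_le.1 (hHper.isBounded_of_continuous hT hHcont)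
  have hHK : ∀ t, |H t| ≤ K := fun t => hK _ (mem_range_self t)
  refine ⟨K, (abs_nonneg _).trans (hHK 0), fun ε hε α β hab g g' hg hg' => ?_⟩
  have hu : ∀ t, HasDerivAt (fun s => ε * H (s / ε)) (h (t / ε)) t := fun t => by
    have := ((hH (t / ε)).comp t ((hasDerivAt_id t).div_const ε)).const_mul ε
    rwa [mul_one_div, mul_div_cancel₀ _ hε.ne'] at this
  have huK : ∀ t, |ε * H (t / ε)| ≤ ε * K := fun t => by
    rw [abs_mul, abs_of_pos hε]
    exact mul_le_mul_of_nonneg_left (hHK _) hε.le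
  exact abs_integral_deriv_mul_le hab (fun t _ => hu t) hg
    ((hcont.comp (continuous_id.div_const ε)).intervalIntegrable α β) hg' (fun t _ => huK t)

/-- Averaging lemma for a fast oscillating periodic density `|b'(·/ε)|`: it can be
replaced by its mean at cost `O(ε)`, uniformly over `C¹` test functions `g`. -/
theorem averaging_oscillating_density (b b' : ℝ → ℝ)
    (hderiv : ∀ t, HasDerivAt b (b' t) t)
    (hcont : Continuous b')
    (hper : Function.Periodic b 1) :
    ∃ C > (0 : ℝ), ∀ ε > (0 : ℝ), ∀ α β : ℝ, α ≤ β → ∀ g g' : ℝ → ℝ,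
      (∀ t ∈ Set.Icc α β, HasDerivAt g (g' t) t) →
      ContinuousOn g' (Set.Icc α β) →
      |(∫ t in α..β, |b' (t / ε)| * g t) -
          (∫ z in (0:ℝ)..1, |b' z|) * ∫ t in α..β, g t| ≤
        C * ε * (sSup ((fun t => |g t|) '' Set.Icc α β) + ∫ t in α..β, |g' t|) := by
  have hb' : b' = deriv b := funext fun t => (hderiv t).deriv.symm
  set M := ∫ z in (0:ℝ)..1, |b' z|
  have hper' : Function.Periodic (fun z => |b' z| - M) 1 := fun z => by
    simp only [hb', hper.deriv z]
  have hzero : ∫ z in (0:ℝ)..1, (|b' z| - M) = 0 := by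
    rw [intervalIntegral.integral_sub (hcont.abs.intervalIntegrable 0 1) intervalIntegrable_const]
    simp [M]
  obtain ⟨K, hK0, hK⟩ :=
    hper'.exists_abs_integral_comp_div_mul_le one_ne_zero (hcont.abs.sub continuous_const) hzero
  refine ⟨2 * K + 1, by positivity, fun ε hε α β hab g g' hg hg' => ?_⟩
  have hgcont : ContinuousOn g (Icc α β) := fun t ht => (hg t ht).continuousAt.continuousWithinAt
  set S := sSup ((fun t => |g t|) '' Icc α β)
  have hgS : ∀ t ∈ Icc α β, |g t| ≤ S := fun t ht =>
    le_csSup (isCompact_Icc.image_of_continuousOn hgcont.abs).bddAbove ⟨t, ht, rfl⟩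
  have hα := hgS α (left_mem_Icc.2 hab)
  have hβ := hgS β (right_mem_Icc.2 hab)
  have hI : 0 ≤ ∫ t in α..β, |g' t| := intervalIntegral.integral_nonneg hab fun _ _ => abs_nonneg _
  have hcentered : (∫ t in α..β, |b' (t / ε)| * g t) - M * ∫ t in α..β, g t
      = ∫ t in α..β, (|b' (t / ε)| - M) * g t := by
    simp only [sub_mul, ← intervalIntegral.integral_const_mul]
    refine (intervalIntegral.integral_sub ?_ ?_).symm
    · exact ((hcont.comp (continuous_id.div_const ε)).abs.continuousOn.mul
        hgcont).intervalIntegrable_of_Icc hab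
    · exact (continuousOn_const.mul hgcont).intervalIntegrable_of_Icc hab
  rw [hcentered]
  calc _ ≤ ε * K * (|g α| + |g β| + ∫ t in α..β, |g' t|) :=
        hK ε hε α β hab g g' hg (hg'.intervalIntegrable_of_Icc hab)
    _ ≤ ε * K * (S + S + ∫ t in α..β, |g' t|) := by gcongr
    _ ≤ (2 * K + 1) * ε * (S + ∫ t in α..β, |g' t|) := by
        have hS : 0 ≤ S := (abs_nonneg _).trans hα
        nlinarith [mul_nonneg hε.le hS, mul_nonneg hε.le hI, mul_nonneg (mul_nonneg hε.le hK0) hI]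
end

section
/- For μ ∈ (0, 1/8), the function v on the square □ = (0,1) × (0,1) defined by v(x) = 1 if |x − p| < 3μ and v(x) = ln|x − p| / ln(3μ) if |x − p| ≥ 3μ, where p = (1/2, 0), satisfies ‖v‖²_{L²(Ξ_μ)} ≥ C μ |ln μ| ‖v‖²_{H¹(□)} for some constant C > 0 independent of μ, where Ξ_μ := {(x₁, 0) : |x₁ − 1/2| < μ}. -/
/-!
On `Ξ_μ` the potential is identically `1`, so the trace side equals `2μ`. Off the circle
`|x - p| = 3μ`, a null set, the energy density `v² + |∇v|²` is at most
`8 / (ln²(3μ) · max(|x - p|, 3μ)²)`: inside the disc this is `|3μ ln 3μ| < 1`, outside it follows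
from `|∇ ln|x - p|| = 1/|x - p|` and `|r ln r| ≤ 2` for `r ≤ 2`. Since
`2 max(|x - p|, 3μ)² ≥ (x₁ - 1/2)² + max(x₂, 3μ)²`, integrating first in `x₁` (a Cauchy density)
and then in `x₂` gives `‖v‖²_{H¹(□)} ≤ 16π (1 - ln 3μ) / ln²(3μ) = O(1 / |ln μ|)`.
-/

open MeasureTheory

/-- The distance to the point `p = (1/2, 0)` in the Euclidean metric of `ℝ²`. -/
noncomputable def distToP (x : ℝ × ℝ) : ℝ :=
  Real.sqrt ((x.1 - 1 / 2) ^ 2 + x.2 ^ 2)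

/-- The logarithmic capacity potential of the disc of radius `3μ` centered at `(1/2,0)`. -/
noncomputable def logPotential (μ : ℝ) (x : ℝ × ℝ) : ℝ :=
  if distToP x < 3 * μ then 1 else Real.log (distToP x) / Real.log (3 * μ)

open Set Real ProbabilityTheory ContinuousLinearMap

lemma continuous_distToP : Continuous distToP := by
  unfold distToP
  fun_prop

lemma abs_fst_sub_le_distToP (x : ℝ × ℝ) : |x.1 - 1 / 2| ≤ distToP x :=
  abs_le_sqrt (le_add_of_nonneg_right (sq_nonneg _))

lemma abs_snd_le_distToP (x : ℝ × ℝ) : |x.2| ≤ distToP x :=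
  abs_le_sqrt (le_add_of_nonneg_left (sq_nonneg _))

lemma distToP_mk_zero (t : ℝ) : distToP (t, 0) = |t - 1 / 2| := by
  simp [distToP, sqrt_sq_eq_abs]

lemma distToP_le_two {x : ℝ × ℝ} (hx : x ∈ Ioo (0 : ℝ) 1 ×ˢ Ioo (0 : ℝ) 1) : distToP x ≤ 2 := by
  obtain ⟨⟨h₁, h₁'⟩, h₂, h₂'⟩ := hx
  exact sqrt_le_iff.mpr ⟨by norm_num, by nlinarith⟩

lemma volume_distToP_eq (c : ℝ) : volume {x : ℝ × ℝ | distToP x = c} = 0 := by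
  have hmeas : MeasurableSet {x : ℝ × ℝ | distToP x = c} :=
    measurableSet_eq_fun continuous_distToP.measurable measurable_const
  rw [Measure.volume_eq_prod, Measure.measure_prod_null hmeas]
  refine Filter.Eventually.of_forall fun a => ?_
  refine ((toFinite {√(c ^ 2 - (a - 1 / 2) ^ 2), -√(c ^ 2 - (a - 1 / 2) ^ 2)}).subset
    fun y (hy : distToP (a, y) = c) => ?_).measure_zero volume
  have hslice : c ^ 2 - (a - 1 / 2) ^ 2 = y ^ 2 := by
    rw [← hy, distToP, sq_sqrt (by positivity)]
    ring
  rw [hslice, sqrt_sq_eq_abs]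
  rcases abs_choice y with h | h <;> simp [h]

lemma hasFDerivAt_distToP {x : ℝ × ℝ} (hx : distToP x ≠ 0) :
    HasFDerivAt distToP
      ((distToP x)⁻¹ • ((x.1 - 1 / 2) • fst ℝ ℝ ℝ + x.2 • snd ℝ ℝ ℝ)) x := by
  have hq : HasFDerivAt (fun y : ℝ × ℝ => (y.1 - 1 / 2) ^ 2 + y.2 ^ 2)
      ((2 * (x.1 - 1 / 2)) • fst ℝ ℝ ℝ + (2 * x.2) • snd ℝ ℝ ℝ) x :=
    (((hasFDerivAt_fst.sub_const (1 / 2 : ℝ)).pow 2).add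
      ((hasFDerivAt_snd : HasFDerivAt (Prod.snd : ℝ × ℝ → ℝ) (snd ℝ ℝ ℝ) x).pow 2)).congr_fderiv
      (by simp [nsmul_eq_mul])
  have hq0 : (x.1 - 1 / 2) ^ 2 + x.2 ^ 2 ≠ 0 := fun h => hx (by rw [distToP, h, sqrt_zero])
  refine (hq.sqrt hq0).congr_fderiv ?_
  change (1 / (2 * distToP x)) • _ = _
  module

lemma fderiv_logPotential_of_lt {μ : ℝ} {x : ℝ × ℝ} (h : distToP x < 3 * μ) :
    fderiv ℝ (logPotential μ) x = 0 := by
  have hv : logPotential μ =ᶠ[nhds x] fun _ => 1 :=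
    ((isOpen_lt continuous_distToP continuous_const).eventually_mem h).mono
      fun y hy => if_pos hy
  rw [hv.fderiv_eq, fderiv_const_apply]

lemma norm_fderiv_logPotential_le {μ : ℝ} {x : ℝ × ℝ} (hμ : 0 ≤ μ) (h : 3 * μ < distToP x) :
    ‖fderiv ℝ (logPotential μ) x‖ ≤ 2 / (distToP x * |log (3 * μ)|) := by
  have hr : 0 < distToP x := by linarith
  have hv : logPotential μ =ᶠ[nhds x] fun y => (log (3 * μ))⁻¹ * log (distToP y) :=
    ((isOpen_lt continuous_const continuous_distToP).eventually_mem h).mono fun y hy => by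
      rw [logPotential, if_neg (not_lt.2 (le_of_lt hy)), div_eq_inv_mul]
  rw [hv.fderiv_eq, (((hasFDerivAt_distToP hr.ne').log hr.ne').const_mul _).fderiv]
  set g := (x.1 - 1 / 2) • fst ℝ ℝ ℝ + x.2 • snd ℝ ℝ ℝ
  have hg : ‖g‖ ≤ distToP x + distToP x :=
    calc _ ≤ |x.1 - 1 / 2| * ‖fst ℝ ℝ ℝ‖ + |x.2| * ‖snd ℝ ℝ ℝ‖ :=
          (norm_add_le _ _).trans_eq (by rw [norm_smul, norm_smul, norm_eq_abs, norm_eq_abs])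
      _ ≤ distToP x * 1 + distToP x * 1 := by
          gcongr
          exacts [abs_fst_sub_le_distToP x, norm_fst_le ℝ ℝ ℝ, abs_snd_le_distToP x,
            norm_snd_le ℝ ℝ ℝ]
      _ = distToP x + distToP x := by ring
  calc _ = |log (3 * μ)|⁻¹ * (distToP x)⁻¹ * (distToP x)⁻¹ * ‖g‖ := by
        simp only [norm_smul, norm_inv, norm_eq_abs, abs_of_pos hr, mul_assoc]
    _ ≤ |log (3 * μ)|⁻¹ * (distToP x)⁻¹ * (distToP x)⁻¹ * (distToP x + distToP x) := by gcongr
    _ = 2 / (distToP x * |log (3 * μ)|) := by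
        rw [div_eq_mul_inv, mul_inv]
        field_simp
        ring

lemma abs_mul_log_le_two {r : ℝ} (hr : 0 < r) (hr₂ : r ≤ 2) : |r * log r| ≤ 2 := by
  rcases le_or_gt r 1 with hr₁ | hr₁
  · rw [mul_comm]
    exact (abs_log_mul_self_lt r hr hr₁).le.trans one_le_two
  · have h₀ : 0 ≤ log r := log_nonneg hr₁.le
    have h₁ : log r ≤ 1 := (log_le_sub_one_of_pos hr).trans (by linarith)
    rw [abs_of_nonneg (by positivity)]
    nlinarith

lemma sq_logPotential_add_sq_norm_fderiv_le {μ : ℝ} {x : ℝ × ℝ} (hμ : 0 < μ) (hμ₁ : 3 * μ < 1)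
    (hx : distToP x ≤ 2) (hne : distToP x ≠ 3 * μ) :
    logPotential μ x ^ 2 + ‖fderiv ℝ (logPotential μ) x‖ ^ 2 ≤
      8 / (log (3 * μ) ^ 2 * max (distToP x) (3 * μ) ^ 2) := by
  have hL : log (3 * μ) ≠ 0 := (log_neg (by linarith) hμ₁).ne
  rcases hne.lt_or_gt with h | h
  · rw [logPotential, if_pos h, fderiv_logPotential_of_lt h, max_eq_right h.le,
      le_div_iff₀ (by positivity)]
    have h₁ := abs_log_mul_self_lt (3 * μ) (by linarith) hμ₁.le
    rw [norm_zero]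
    nlinarith [sq_abs (log (3 * μ) * (3 * μ)), abs_nonneg (log (3 * μ) * (3 * μ))]
  · have hr : 0 < distToP x := by linarith
    rw [logPotential, if_neg h.not_gt, max_eq_left h.le]
    have hv : (log (distToP x) / log (3 * μ)) ^ 2 ≤ 4 / (log (3 * μ) ^ 2 * distToP x ^ 2) := by
      rw [div_pow, div_le_div_iff₀ (by positivity) (by positivity)]
      have hrlog : (distToP x * log (distToP x)) ^ 2 ≤ 2 ^ 2 := by
        rw [← sq_abs]
        exact pow_le_pow_left₀ (abs_nonneg _) (abs_mul_log_le_two hr hx) 2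
      calc log (distToP x) ^ 2 * (log (3 * μ) ^ 2 * distToP x ^ 2)
          = log (3 * μ) ^ 2 * (distToP x * log (distToP x)) ^ 2 := by ring
        _ ≤ log (3 * μ) ^ 2 * 2 ^ 2 := by gcongr
        _ = 4 * log (3 * μ) ^ 2 := by ring
    have hg : ‖fderiv ℝ (logPotential μ) x‖ ^ 2 ≤ 4 / (log (3 * μ) ^ 2 * distToP x ^ 2) :=
      calc _ ≤ (2 / (distToP x * |log (3 * μ)|)) ^ 2 :=
            pow_le_pow_left₀ (norm_nonneg _) (norm_fderiv_logPotential_le hμ.le h) 2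
        _ = 4 / (log (3 * μ) ^ 2 * distToP x ^ 2) := by rw [div_pow, mul_pow, sq_abs]; ring
    linarith [show 8 / (log (3 * μ) ^ 2 * distToP x ^ 2) =
      4 / (log (3 * μ) ^ 2 * distToP x ^ 2) + 4 / (log (3 * μ) ^ 2 * distToP x ^ 2) by ring]

lemma sq_add_max_sq_le_two_mul_max_distToP_sq {s : ℝ} (hs : 0 < s) (x : ℝ × ℝ) :
    (x.1 - 1 / 2) ^ 2 + max x.2 s ^ 2 ≤ 2 * max (distToP x) s ^ 2 := by
  have h₁ : |x.1 - 1 / 2| ≤ |max (distToP x) s| :=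
    ((abs_fst_sub_le_distToP x).trans (le_max_left _ _)).trans (le_abs_self _)
  have h₂ : |max x.2 s| ≤ |max (distToP x) s| := by
    rw [abs_of_pos (lt_max_of_lt_right hs), abs_of_pos (lt_max_of_lt_right hs)]
    exact max_le_max_right s ((le_abs_self _).trans (abs_snd_le_distToP x))
  linarith [sq_le_sq.mpr h₁, sq_le_sq.mpr h₂]

lemma setIntegral_inv_sq_add_sq_le (s : Set ℝ) (c : ℝ) {b : ℝ} (hb : 0 < b) :
    ∫ x in s, ((x - c) ^ 2 + b ^ 2)⁻¹ ≤ π / b := by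
  lift b to NNReal using hb.le
  have hcauchy : (fun x : ℝ => ((x - c) ^ 2 + (b : ℝ) ^ 2)⁻¹) =
      fun x => π * (b : ℝ)⁻¹ * cauchyPDFReal c b x := by
    ext x
    rw [cauchyPDFReal_def]
    field_simp
  rw [hcauchy, integral_const_mul]
  calc _ ≤ π * (b : ℝ)⁻¹ * ∫ x, cauchyPDFReal c b x :=
        mul_le_mul_of_nonneg_left (setIntegral_le_integral (integrable_cauchyPDFReal c)
          (Filter.Eventually.of_forall fun x => by rw [cauchyPDFReal_def]; positivity))
          (by positivity)
    _ = π / b := by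
        rw [integral_cauchyPDFReal_eq_one c (by exact_mod_cast hb.ne'), div_eq_mul_inv, mul_one]

lemma continuous_inv_max_const {s : ℝ} (hs : 0 < s) : Continuous fun y : ℝ => (max y s)⁻¹ :=
  (continuous_id.max continuous_const).inv₀ fun _ => (lt_max_of_lt_right hs).ne'

lemma integral_Ioo_inv_max {s : ℝ} (hs : 0 < s) (hs₁ : s ≤ 1) :
    ∫ y in Ioo (0 : ℝ) 1, (max y s)⁻¹ = 1 - log s := by
  have hcont := continuous_inv_max_const hs
  rw [← integral_Ioc_eq_integral_Ioo, ← intervalIntegral.integral_of_le zero_le_one,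
    ← intervalIntegral.integral_add_adjacent_intervals (b := s)
      (hcont.intervalIntegrable _ _) (hcont.intervalIntegrable _ _)]
  have h₁ : ∫ y in (0 : ℝ)..s, (max y s)⁻¹ = 1 := by
    rw [intervalIntegral.integral_congr (g := fun _ => s⁻¹) fun y hy => by
      rw [uIcc_of_le hs.le] at hy; simp [max_eq_right hy.2]]
    simp [hs.ne']
  have h₂ : ∫ y in s..1, (max y s)⁻¹ = -log s := by
    rw [intervalIntegral.integral_congr (g := fun y => y⁻¹) fun y hy => by
      rw [uIcc_of_le hs₁] at hy; simp [max_eq_left hy.1], integral_inv_of_pos hs one_pos,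
      one_div, log_inv]
  rw [h₁, h₂, sub_eq_add_neg]

lemma integrableOn_inv_sq_add_max_sq (c : ℝ) {s : ℝ} (hs : 0 < s) :
    IntegrableOn (fun x : ℝ × ℝ => ((x.1 - c) ^ 2 + max x.2 s ^ 2)⁻¹)
      (Ioo (0 : ℝ) 1 ×ˢ Ioo (0 : ℝ) 1) := by
  have hcont : Continuous fun x : ℝ × ℝ => ((x.1 - c) ^ 2 + max x.2 s ^ 2)⁻¹ := by
    refine Continuous.inv₀ (by fun_prop) fun x => ?_
    have : 0 < max x.2 s := lt_max_of_lt_right hs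
    positivity
  exact (hcont.continuousOn.integrableOn_compact (isCompact_Icc.prod isCompact_Icc)).mono_set
    (prod_mono Ioo_subset_Icc_self Ioo_subset_Icc_self)

lemma integral_inv_sq_add_max_sq_le (c : ℝ) {s : ℝ} (hs : 0 < s) (hs₁ : s ≤ 1) :
    ∫ x in Ioo (0 : ℝ) 1 ×ˢ Ioo (0 : ℝ) 1, ((x.1 - c) ^ 2 + max x.2 s ^ 2)⁻¹ ≤
      π * (1 - log s) := by
  have hint := integrableOn_inv_sq_add_max_sq c hs
  rw [IntegrableOn, Measure.volume_eq_prod, ← Measure.prod_restrict] at hint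
  rw [Measure.volume_eq_prod, ← Measure.prod_restrict, integral_prod_symm _ hint,
    ← integral_Ioo_inv_max hs hs₁, ← integral_const_mul]
  refine integral_mono_of_nonneg (Filter.Eventually.of_forall fun y => ?_) ?_
    (Filter.Eventually.of_forall fun y => ?_)
  · exact integral_nonneg fun x => by positivity
  · exact (((continuous_inv_max_const hs).continuousOn.integrableOn_compact
      isCompact_Icc).mono_set Ioo_subset_Icc_self).const_mul π
  · simpa only [div_eq_mul_inv] using
      setIntegral_inv_sq_add_sq_le (Ioo 0 1) c (lt_max_of_lt_right hs : 0 < max y s)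

lemma integral_energy_logPotential_le {μ : ℝ} (hμ : 0 < μ) (hμ₁ : 3 * μ < 1) :
    ∫ x in Ioo (0 : ℝ) 1 ×ˢ Ioo (0 : ℝ) 1,
        (logPotential μ x ^ 2 + ‖fderiv ℝ (logPotential μ) x‖ ^ 2) ≤
      16 / log (3 * μ) ^ 2 * (π * (1 - log (3 * μ))) := by
  have hs : 0 < 3 * μ := by linarith
  have hL : log (3 * μ) ≠ 0 := (log_neg hs hμ₁).ne
  have hcircle : ∀ᵐ x : ℝ × ℝ, distToP x ≠ 3 * μ :=
    measure_eq_zero_iff_ae_notMem.mp (volume_distToP_eq (3 * μ))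
  calc _ ≤ ∫ x in Ioo (0 : ℝ) 1 ×ˢ Ioo (0 : ℝ) 1,
          16 / log (3 * μ) ^ 2 * ((x.1 - 1 / 2) ^ 2 + max x.2 (3 * μ) ^ 2)⁻¹ := by
        refine integral_mono_of_nonneg (Filter.Eventually.of_forall fun x => by positivity)
          ((integrableOn_inv_sq_add_max_sq _ hs).const_mul _) ?_
        filter_upwards [ae_restrict_of_ae hcircle,
          ae_restrict_mem (measurableSet_Ioo.prod measurableSet_Ioo)] with x hne hx
        have hρ : 0 < (x.1 - 1 / 2) ^ 2 + max x.2 (3 * μ) ^ 2 := by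
          have : 0 < max x.2 (3 * μ) := lt_max_of_lt_right hs
          positivity
        refine (sq_logPotential_add_sq_norm_fderiv_le hμ hμ₁ (distToP_le_two hx) hne).trans ?_
        rw [← div_eq_mul_inv, div_div, div_le_div_iff₀ (by positivity) (by positivity)]
        nlinarith [sq_add_max_sq_le_two_mul_max_distToP_sq hs x]
    _ ≤ 16 / log (3 * μ) ^ 2 * (π * (1 - log (3 * μ))) := by
        rw [integral_const_mul]
        gcongr
        exact integral_inv_sq_add_max_sq_le _ hs hμ₁.le

lemma integral_sq_logPotential_trace {μ : ℝ} (hμ : 0 < μ) :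
    ∫ t in Ioo (1 / 2 - μ) (1 / 2 + μ), logPotential μ (t, 0) ^ 2 = 2 * μ := by
  have hone : EqOn (fun t => logPotential μ (t, 0) ^ 2) (fun _ => 1)
      (Ioo (1 / 2 - μ) (1 / 2 + μ)) := fun t ht => by
    have hin : distToP (t, 0) < 3 * μ := by
      rw [distToP_mk_zero, abs_sub_lt_iff]
      constructor <;> linarith [ht.1, ht.2]
    simp only [logPotential, if_pos hin, one_pow]
  rw [setIntegral_congr_fun measurableSet_Ioo hone, setIntegral_const, Real.volume_real_Ioo,
    smul_eq_mul, mul_one, max_eq_left (by linarith)]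
  ring

lemma abs_log_mul_one_sub_log_div_sq_le {μ : ℝ} (hμ : 0 < μ) (hμ₈ : μ < 1 / 8) :
    |log μ| * (1 - log (3 * μ)) / log (3 * μ) ^ 2 ≤ 11 := by
  have hL : log (3 * μ) ≤ -5 / 8 := by
    linarith [log_le_sub_one_of_pos (show 0 < 3 * μ by linarith)]
  have hlog3 : log 3 ≤ 2 := by linarith [log_le_sub_one_of_pos (show (0 : ℝ) < 3 by norm_num)]
  rw [abs_of_neg (log_neg hμ (by linarith)), div_le_iff₀ (by nlinarith),
    show log μ = log (3 * μ) - log 3 by rw [log_mul (by norm_num) hμ.ne']; ring]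
  nlinarith [mul_nonneg (sub_nonneg.2 hlog3) (by linarith : (0 : ℝ) ≤ 1 - log (3 * μ)),
    mul_nonneg (by linarith : (0 : ℝ) ≤ -5 / 8 - log (3 * μ))
      (by linarith : (0 : ℝ) ≤ 13 / 4 - 10 * log (3 * μ))]

/-- Sharpness of the trace estimate of Lemma 5.2: for the logarithmic potential `v`,
`‖v‖²_{L²(Ξ_μ)} ≥ C μ |ln μ| ‖v‖²_{H¹(□)}` with `□ = (0,1)²` and
`Ξ_μ = {(x₁,0) : |x₁ − 1/2| < μ}`. -/
theorem log_potential_trace_lower_bound :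
    ∃ C > (0 : ℝ), ∀ μ : ℝ, 0 < μ → μ < 1 / 8 →
      (∫ x₁ in Set.Ioo (1 / 2 - μ) (1 / 2 + μ), (logPotential μ (x₁, 0)) ^ 2) ≥
        C * μ * |Real.log μ| *
          ∫ x in Set.Ioo (0 : ℝ) 1 ×ˢ Set.Ioo (0 : ℝ) 1,
            ((logPotential μ x) ^ 2 + ‖fderiv ℝ (logPotential μ) x‖ ^ 2) := by
  refine ⟨1 / 360, by norm_num, fun μ hμ hμ₈ => ?_⟩
  rw [ge_iff_le, integral_sq_logPotential_trace hμ]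
  calc _ ≤ 1 / 360 * μ * |log μ| * (16 / log (3 * μ) ^ 2 * (π * (1 - log (3 * μ)))) := by
        gcongr
        exact integral_energy_logPotential_le hμ (by linarith)
    _ = 2 * π / 45 * μ * (|log μ| * (1 - log (3 * μ)) / log (3 * μ) ^ 2) := by ring
    _ ≤ 2 * π / 45 * μ * 11 := by
        gcongr
        exact abs_log_mul_one_sub_log_div_sq_le hμ hμ₈
    _ ≤ 2 * μ := by nlinarith [pi_le_four]
end

section
/- Let d > 0, η ∈ (0, d), a₀ ∈ ℂ, and k = e^{iπ/4}. Suppose k cos(kd) + a₀ sin(kd) ≠ 0. Then the function U : [0,d] → ℂ defined by U(x₂) = −[k sin(kη) + a₀(1 − cos(kη))]/[k cos(kd) + a₀ sin(kd)] · sin(k(d − x₂)) for η ≤ x₂ ≤ d, and U(x₂) = 1 + (a₀/k) sin(k x₂) − [k cos(k(d−η)) + a₀ sin(kd)]/[k cos(kd) + a₀ sin(kd)] · (cos(k x₂) + (a₀/k) sin(k x₂)) for 0 ≤ x₂ ≤ η, is continuous, continuously differentiable, and satisfies −U'' − i U = −i F on (0,η) ∪ (η,d), U'(0) − a₀ U(0)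 = 0, and U(d) = 0, where F(x₂) = 1 for 0 < x₂ < η and F(x₂) = 0 for η < x₂ < d. -/
open Complex

/-- `k = e^{iπ/4}`, so `k² = i`. -/
noncomputable def kConst : ℂ := Complex.exp (Complex.I * Real.pi / 4)

/-- The explicit piecewise solution `U` of `−U'' − iU = −iF`, `U'(0) = a₀U(0)`, `U(d)=0`. -/
noncomputable def Uexpl (d η : ℝ) (a₀ : ℂ) (t : ℝ) : ℂ :=
  if t ≤ η then
    1 + (a₀ / kConst) * Complex.sin (kConst * t) -
      ((kConst * Complex.cos (kConst * ((d : ℂ) - (η : ℂ))) + a₀ * Complex.sin (kConst * d)) /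
        (kConst * Complex.cos (kConst * d) + a₀ * Complex.sin (kConst * d))) *
        (Complex.cos (kConst * t) + (a₀ / kConst) * Complex.sin (kConst * t))
  else
    -((kConst * Complex.sin (kConst * η) + a₀ * (1 - Complex.cos (kConst * η))) /
        (kConst * Complex.cos (kConst * d) + a₀ * Complex.sin (kConst * d))) *
      Complex.sin (kConst * ((d : ℂ) - (t : ℂ)))

/-- The right-hand side `F`: equal to `1` on `(0,η)` and `0` on `(η,d)`. -/
noncomputable def Fexpl (η : ℝ) (t : ℝ) : ℂ := if t < η then 1 else 0

/-!
Both pieces of `Uexpl` have the form `α + β cos (k (t - s)) + γ sin (k (t - s))`, a family closed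
under differentiation; since `k² = i`, each member solves `-y'' - i y = -i α`, and `α` is `1` on
`(0, η)` and `0` on `(η, d)`. The left piece satisfies the Robin condition at `0` and the right
one the Dirichlet condition at `d` by construction, while the coefficients `A`, `B` solve the `2 × 2`
system matching values and derivatives at `η`, whose determinant is `k cos (k d) + a₀ sin (k d)`.
So the glued function is `C¹` on `[0, d]` and piecewise `C²`.
-/

open Filter Topology

section Gluing

variable {E : Type*} [NormedAddCommGroup E] [NormedSpace ℝ E] {f g f' g' : ℝ → E} {η x : ℝ}

lemma hasDerivAt_ite_le_of_lt {e : E} (hx : x < η) (hf : HasDerivAt f e x) :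
    HasDerivAt (fun t => if t ≤ η then f t else g t) e x := by
  refine hf.congr_of_eventuallyEq ?_
  filter_upwards [Iio_mem_nhds hx] with t ht using if_pos (le_of_lt ht)

lemma hasDerivAt_ite_le_of_gt {e : E} (hx : η < x) (hg : HasDerivAt g e x) :
    HasDerivAt (fun t => if t ≤ η then f t else g t) e x := by
  refine hg.congr_of_eventuallyEq ?_
  filter_upwards [Ioi_mem_nhds hx] with t ht using if_neg (not_le.mpr ht)

lemma hasDerivAt_ite_le (hf : ∀ x, HasDerivAt f (f' x) x) (hg : ∀ x, HasDerivAt g (g' x) x)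
    (hfg : f η = g η) (hfg' : f' η = g' η) (x : ℝ) :
    HasDerivAt (fun t => if t ≤ η then f t else g t) (if x ≤ η then f' x else g' x) x := by
  rcases lt_trichotomy x η with hlt | rfl | hgt
  · simpa [hlt.le] using hasDerivAt_ite_le_of_lt hlt (hf x)
  · have hleft : HasDerivWithinAt (fun t => if t ≤ x then f t else g t) (f' x) (Set.Iic x) x :=
      (hf x).hasDerivWithinAt.congr (fun t ht => if_pos ht) (if_pos le_rfl)
    have hright :
        HasDerivWithinAt (fun t => if t ≤ x then f t else g t) (f' x) (Set.Ici x) x := by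
      rw [hfg']
      refine (hg x).hasDerivWithinAt.congr (fun t ht => ?_) (by simp [hfg])
      rcases (Set.mem_Ici.mp ht).eq_or_lt with rfl | hxt
      · simp [hfg]
      · exact if_neg (not_le.mpr hxt)
    simpa [Set.Iic_union_Ici] using hleft.union hright
  · simpa [not_le.mpr hgt] using hasDerivAt_ite_le_of_gt hgt (hg x)

end Gluing

lemma kConst_ne_zero : kConst ≠ 0 := exp_ne_zero _

lemma kConst_sq : kConst ^ 2 = I := by
  rw [kConst, ← exp_nat_mul]
  convert exp_pi_div_two_mul_I using 2
  push_cast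
  ring

noncomputable def trigComb (c s α β γ : ℂ) (z : ℂ) : ℂ :=
  α + β * cos (c * (z - s)) + γ * sin (c * (z - s))

lemma hasDerivAt_trigComb (c s α β γ z : ℂ) :
    HasDerivAt (trigComb c s α β γ) (trigComb c s 0 (c * γ) (-(c * β)) z) z := by
  have hlin : HasDerivAt (fun w => c * (w - s)) c z := by
    simpa using ((hasDerivAt_id z).sub_const s).const_mul c
  refine (((hlin.ccos.const_mul β).const_add α).add (hlin.csin.const_mul γ)).congr_deriv ?_
  simp only [trigComb]
  ring

lemma differentiable_trigComb (c s α β γ : ℂ) : Differentiable ℂ (trigComb c s α β γ) :=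
  fun z => (hasDerivAt_trigComb c s α β γ z).differentiableAt

lemma deriv_trigComb (c s α β γ : ℂ) :
    deriv (trigComb c s α β γ) = trigComb c s 0 (c * γ) (-(c * β)) :=
  funext fun z => (hasDerivAt_trigComb c s α β γ z).deriv

lemma deriv_deriv_trigComb (c s α β γ z : ℂ) :
    deriv (deriv (trigComb c s α β γ)) z = -c ^ 2 * (trigComb c s α β γ z - α) := by
  simp only [deriv_trigComb, trigComb]
  ring

lemma hasDerivAt_trigComb_ofReal (c s α β γ : ℂ) (x : ℝ) :
    HasDerivAt (fun t : ℝ => trigComb c s α β γ t) (deriv (trigComb c s α β γ) x) x :=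
  (differentiable_trigComb c s α β γ x).hasDerivAt.comp_ofReal

lemma hasDerivAt_deriv_trigComb_ofReal (c s α β γ : ℂ) (x : ℝ) :
    HasDerivAt (fun t : ℝ => deriv (trigComb c s α β γ) t)
      (deriv (deriv (trigComb c s α β γ)) x) x := by
  rw [deriv_trigComb]
  exact hasDerivAt_trigComb_ofReal c s 0 _ _ x

lemma continuous_deriv_trigComb_ofReal (c s α β γ : ℂ) :
    Continuous fun t : ℝ => deriv (trigComb c s α β γ) t :=
  continuous_iff_continuousAt.2 fun x =>
    (hasDerivAt_deriv_trigComb_ofReal c s α β γ x).continuousAt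

lemma trigComb_kConst_ode (s α β γ z : ℂ) :
    -deriv (deriv (trigComb kConst s α β γ)) z - I * trigComb kConst s α β γ z = -I * α := by
  rw [deriv_deriv_trigComb, kConst_sq]
  ring

section Pieces

variable (d η : ℝ) (a₀ : ℂ)

noncomputable def coeffA : ℂ :=
  (kConst * cos (kConst * ((d : ℂ) - η)) + a₀ * sin (kConst * d)) /
    (kConst * cos (kConst * d) + a₀ * sin (kConst * d))

noncomputable def coeffB : ℂ :=
  (kConst * sin (kConst * η) + a₀ * (1 - cos (kConst * η))) /
    (kConst * cos (kConst * d) + a₀ * sin (kConst * d))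

noncomputable def leftPiece : ℂ → ℂ :=
  trigComb kConst 0 1 (-coeffA d η a₀) (a₀ / kConst * (1 - coeffA d η a₀))

/-- `-B sin (k (d - z))`, written as `B sin (k (z - d))`. -/
noncomputable def rightPiece : ℂ → ℂ :=
  trigComb kConst d 0 0 (coeffB d η a₀)

lemma Uexpl_eq_ite :
    Uexpl d η a₀ =
      fun t : ℝ => if t ≤ η then leftPiece d η a₀ t else rightPiece d η a₀ t := by
  funext t
  have hsin : sin (kConst * ((t : ℂ) - d)) = -sin (kConst * ((d : ℂ) - t)) := by
    rw [← sin_neg]; ring_nf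
  simp only [Uexpl, leftPiece, rightPiece, trigComb, coeffA, coeffB, sub_zero, hsin]
  split_ifs <;> ring

lemma leftPiece_robin : deriv (leftPiece d η a₀) 0 - a₀ * leftPiece d η a₀ 0 = 0 := by
  simp only [leftPiece, deriv_trigComb, trigComb, sub_zero, mul_zero, cos_zero, sin_zero]
  field_simp [kConst_ne_zero]
  ring

lemma rightPiece_dirichlet : rightPiece d η a₀ d = 0 := by
  simp [rightPiece, trigComb]

variable {d η a₀}

lemma leftPiece_eq_rightPiece (hk : kConst * cos (kConst * d) + a₀ * sin (kConst * d) ≠ 0) :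
    leftPiece d η a₀ η = rightPiece d η a₀ η := by
  have hsplit : kConst * (d : ℂ) = kConst * ((d : ℂ) - η) + kConst * η := by ring
  have hsin : sin (kConst * ((η : ℂ) - d)) = -sin (kConst * ((d : ℂ) - η)) := by
    rw [← sin_neg]; ring_nf
  simp only [leftPiece, rightPiece, trigComb, coeffA, coeffB, sub_zero, hsin]
  rw [hsplit, sin_add, cos_add] at hk ⊢
  field_simp [kConst_ne_zero, hk]
  linear_combination (-(kConst * a₀ * sin (kConst * ((d : ℂ) - η)))) *
    sin_sq_add_cos_sq (kConst * (η : ℂ))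

lemma deriv_leftPiece_eq_deriv_rightPiece
    (hk : kConst * cos (kConst * d) + a₀ * sin (kConst * d) ≠ 0) :
    deriv (leftPiece d η a₀) η = deriv (rightPiece d η a₀) η := by
  have hsplit : kConst * (d : ℂ) = kConst * ((d : ℂ) - η) + kConst * η := by ring
  have hcos : cos (kConst * ((η : ℂ) - d)) = cos (kConst * ((d : ℂ) - η)) := by
    rw [← cos_neg]; ring_nf
  simp only [leftPiece, rightPiece, deriv_trigComb, trigComb, coeffA, coeffB, sub_zero, hcos]
  rw [hsplit, sin_add, cos_add] at hk ⊢
  field_simp [kConst_ne_zero, hk]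
  linear_combination (kConst * a₀ * cos (kConst * ((d : ℂ) - η))) *
    sin_sq_add_cos_sq (kConst * (η : ℂ))

end Pieces

theorem Uexpl_solves_general (d η : ℝ) (hη : 0 < η) (hηd : η < d) (a₀ : ℂ)
    (hk : kConst * Complex.cos (kConst * d) + a₀ * Complex.sin (kConst * d) ≠ 0) :
    ∃ U' U'' : ℝ → ℂ,
      ContinuousOn (Uexpl d η a₀) (Set.Icc 0 d) ∧
      (∀ x ∈ Set.Icc (0 : ℝ) d, HasDerivWithinAt (Uexpl d η a₀) (U' x) (Set.Icc 0 d) x) ∧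
      ContinuousOn U' (Set.Icc 0 d) ∧
      (∀ x ∈ Set.Ioo (0 : ℝ) η ∪ Set.Ioo η d,
        HasDerivAt U' (U'' x) x ∧
        -U'' x - Complex.I * Uexpl d η a₀ x = -Complex.I * Fexpl η x) ∧
      U' 0 - a₀ * Uexpl d η a₀ 0 = 0 ∧
      Uexpl d η a₀ d = 0 := by
  set L := leftPiece d η a₀
  set R := rightPiece d η a₀
  have hL (x : ℝ) : HasDerivAt (fun t : ℝ => L t) (deriv L x) x := hasDerivAt_trigComb_ofReal ..
  have hR (x : ℝ) : HasDerivAt (fun t : ℝ => R t) (deriv R x) x := hasDerivAt_trigComb_ofReal ..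
  have hU' := hasDerivAt_ite_le hL hR (leftPiece_eq_rightPiece hk)
    (deriv_leftPiece_eq_deriv_rightPiece hk)
  rw [Uexpl_eq_ite]
  refine ⟨fun t => if t ≤ η then deriv L t else deriv R t,
    fun t => if t ≤ η then deriv (deriv L) t else deriv (deriv R) t,
    fun x _ => (hU' x).continuousAt.continuousWithinAt,
    fun x _ => (hU' x).hasDerivWithinAt, ?_, ?_, ?_, ?_⟩
  · refine ((continuous_deriv_trigComb_ofReal ..).if_le (continuous_deriv_trigComb_ofReal ..)
      continuous_id continuous_const fun x hx => ?_).continuousOn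
    rw [show x = η from hx]
    exact deriv_leftPiece_eq_deriv_rightPiece hk
  · rintro x (⟨-, hxη⟩ | ⟨hηx, -⟩)
    · simp only [hxη.le, if_true, Fexpl, hxη]
      exact ⟨hasDerivAt_ite_le_of_lt hxη (hasDerivAt_deriv_trigComb_ofReal ..),
        trigComb_kConst_ode ..⟩
    · simp only [not_le.mpr hηx, if_false, Fexpl, not_lt.mpr hηx.le]
      exact ⟨hasDerivAt_ite_le_of_gt hηx (hasDerivAt_deriv_trigComb_ofReal ..),
        trigComb_kConst_ode ..⟩
  · simpa only [hη.le, if_true, ofReal_zero] using leftPiece_robin d η a₀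
  · simpa only [not_le.mpr hηd, if_false] using rightPiece_dirichlet d η a₀

/-- The explicit function `U` is continuous, continuously differentiable on `[0,d]`, and
solves `−U'' − iU = −iF` on `(0,η) ∪ (η,d)` with `U'(0) − a₀ U(0) = 0` and `U d = 0`. -/
theorem Uexpl_solves (d η : ℝ) (hd : 0 < d) (hη : 0 < η) (hηd : η < d) (a₀ : ℂ)
    (hk : kConst * Complex.cos (kConst * d) + a₀ * Complex.sin (kConst * d) ≠ 0) :
    ∃ U' U'' : ℝ → ℂ,
      ContinuousOn (Uexpl d η a₀) (Set.Icc 0 d) ∧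
      (∀ x ∈ Set.Icc (0 : ℝ) d, HasDerivWithinAt (Uexpl d η a₀) (U' x) (Set.Icc 0 d) x) ∧
      ContinuousOn U' (Set.Icc 0 d) ∧
      (∀ x ∈ Set.Ioo (0 : ℝ) η ∪ Set.Ioo η d,
        HasDerivAt U' (U'' x) x ∧
        -U'' x - Complex.I * Uexpl d η a₀ x = -Complex.I * Fexpl η x) ∧
      U' 0 - a₀ * Uexpl d η a₀ 0 = 0 ∧
      Uexpl d η a₀ d = 0 :=
  Uexpl_solves_general d η hη hηd a₀ hk
end

section
/- With U as in the explicit solution of −U'' − iU = −iF, U'(0) = a₀U(0), U(d) = 0, where F = 1 on (0,η) and F = 0 on (η,d), a₀ ≥ 0 fixed, k = e^{iπ/4}: there exist constants c, C > 0 and η₀ > 0 such that for all η ∈ (0, η₀), c η ≤ ‖U‖_{L²(3η, d)} ≤ C η and c η ≤ ‖U'‖_{L²(3η, d)} ≤ C η. -/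
open Complex MeasureTheory

/-- The coefficient of the explicit solution `U` on `(η, d)`. -/
noncomputable def Ucoef (d η : ℝ) (a₀ : ℂ) : ℂ :=
  -((kConst * Complex.sin (kConst * η) + a₀ * (1 - Complex.cos (kConst * η))) /
      (kConst * Complex.cos (kConst * d) + a₀ * Complex.sin (kConst * d)))

/-- The explicit solution on `(η,d)`: `U(t) = coef · sin(k(d − t))`. -/
noncomputable def Uouter (d η : ℝ) (a₀ : ℂ) (t : ℝ) : ℂ :=
  Ucoef d η a₀ * Complex.sin (kConst * ((d : ℂ) - (t : ℂ)))

/-- Its derivative: `U'(t) = −coef · k cos(k(d − t))`. -/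
noncomputable def Uouter' (d η : ℝ) (a₀ : ℂ) (t : ℝ) : ℂ :=
  -(Ucoef d η a₀ * kConst * Complex.cos (kConst * ((d : ℂ) - (t : ℂ))))

open Filter Set Topology Asymptotics

/-! The coefficient `Ucoef d η a₀` vanishes at `η = 0` with nonzero derivative
`-k² / (k cos (k d) + a₀ sin (k d))`, so its modulus is of exact order `η`. The profiles
`sin (k (d - t))` and `k cos (k (d - t))` have no zeros on `(0, d)` because `k` is not real, so
their `L²(3η, d)` norms tend to positive limits as `η → 0`, and each of the two norms is
`‖Ucoef d η a₀‖` times such a profile norm. -/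

theorem Asymptotics.IsTheta.comp_tendsto {α β E F : Type*} [Norm E] [Norm F] {f : α → E}
    {g : α → F} {l : Filter α} (h : f =Θ[l] g) {k : β → α} {l' : Filter β} (hk : Tendsto k l' l) :
    (f ∘ k) =Θ[l'] (g ∘ k) :=
  ⟨h.1.comp_tendsto hk, h.2.comp_tendsto hk⟩

theorem Asymptotics.IsTheta.exists_pos_bounds {α E F : Type*} [SeminormedAddCommGroup E]
    [SeminormedAddCommGroup F] {f : α → E} {g : α → F} {l : Filter α} (h : f =Θ[l] g) :
    ∃ c C : ℝ, 0 < c ∧ 0 < C ∧ ∀ᶠ x in l, c * ‖g x‖ ≤ ‖f x‖ ∧ ‖f x‖ ≤ C * ‖g x‖ := by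
  obtain ⟨C, hC, hfg⟩ := h.1.exists_pos
  obtain ⟨c, hc, hgf⟩ := h.2.exists_pos
  refine ⟨c⁻¹, C, inv_pos.2 hc, hC, (hfg.bound.and hgf.bound).mono fun x hx => ⟨?_, hx.1⟩⟩
  exact (inv_mul_le_iff₀ hc).2 hx.2

theorem HasDerivAt.isTheta_sub {E : Type*} [NormedAddCommGroup E] [NormedSpace ℝ E]
    {f : ℝ → E} {f' : E} {x : ℝ} (hf : HasDerivAt f f' x) (hf' : f' ≠ 0) :
    (f · - f x) =Θ[𝓝 x] (· - x) := by
  have hpair := HasDerivAtFilter.isTheta_sub hf hf'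
  have ht : Tendsto (fun y => (y, x)) (𝓝 x) (𝓝 x ×ˢ pure x) :=
    tendsto_id.prodMk tendsto_const_pure
  exact hpair.comp_tendsto ht

theorem isTheta_one_sqrt_integral_sq_norm {E : Type*} [NormedAddCommGroup E] {φ : ℝ → E}
    {d : ℝ} (hφ : Continuous φ) (hd : 0 < d) (hφ0 : ∀ t ∈ Ioo 0 d, φ t ≠ 0) :
    (fun s => √(∫ t in s..d, ‖φ t‖ ^ 2)) =Θ[𝓝 0] (fun _ => (1 : ℝ)) := by
  have hcont : Continuous fun t => ‖φ t‖ ^ 2 := by fun_prop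
  have hpos : 0 < √(∫ t in (0 : ℝ)..d, ‖φ t‖ ^ 2) :=
    Real.sqrt_pos.2 <| intervalIntegral.intervalIntegral_pos_of_pos_on
      (hcont.intervalIntegrable _ _) (fun t ht => pow_pos (norm_pos_iff.2 (hφ0 t ht)) 2) hd
  have hlim : Tendsto (fun s => √(∫ t in s..d, ‖φ t‖ ^ 2)) (𝓝 0)
      (𝓝 √(∫ t in (0 : ℝ)..d, ‖φ t‖ ^ 2)) := by
    have : Continuous fun s => ∫ t in s..d, ‖φ t‖ ^ 2 := by
      simp_rw [intervalIntegral.integral_symm d]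
      exact (intervalIntegral.continuous_primitive (fun _ _ => hcont.intervalIntegrable _ _) d).neg
    exact (this.sqrt).tendsto 0
  exact ((isEquivalent_const_iff_tendsto hpos.ne').2 hlim).isTheta.trans
    (isTheta_const_const hpos.ne' one_ne_zero)

theorem sqrt_integral_norm_mul_sq {R : Type*} [NormedDivisionRing R] (c : R) (φ : ℝ → R)
    (a b : ℝ) :
    √(∫ t in a..b, ‖c * φ t‖ ^ 2) = ‖c‖ * √(∫ t in a..b, ‖φ t‖ ^ 2) := by
  simp_rw [norm_mul, mul_pow, intervalIntegral.integral_const_mul]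
  rw [Real.sqrt_mul (sq_nonneg _), Real.sqrt_sq (norm_nonneg _)]

theorem isTheta_sqrt_integral_sq_norm_mul {R : Type*} [NormedDivisionRing R] {κ φ : ℝ → R}
    {a : ℝ → ℝ} {d : ℝ} (hκ : κ =Θ[𝓝 0] fun η => η) (ha : Tendsto a (𝓝 0) (𝓝 0))
    (hφ : Continuous φ) (hd : 0 < d) (hφ0 : ∀ t ∈ Ioo 0 d, φ t ≠ 0) :
    (fun η => √(∫ t in a η..d, ‖κ η * φ t‖ ^ 2)) =Θ[𝓝 0] fun η => η := by
  simp_rw [sqrt_integral_norm_mul_sq]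
  simpa using (isTheta_norm_left.2 hκ).mul
    ((isTheta_one_sqrt_integral_sq_norm hφ hd hφ0).comp_tendsto ha)

theorem Complex.sin_ne_zero_of_im_ne_zero {z : ℂ} (hz : z.im ≠ 0) : Complex.sin z ≠ 0 :=
  Complex.sin_ne_zero_iff.2 fun n hn => hz (by simp [hn])

theorem Complex.cos_ne_zero_of_im_ne_zero {z : ℂ} (hz : z.im ≠ 0) : Complex.cos z ≠ 0 :=
  Complex.cos_ne_zero_iff.2 fun n hn => hz (by simp [hn])

theorem kConst_im_pos : 0 < kConst.im := by
  have : kConst = Complex.exp ((Real.pi / 4 : ℝ) * Complex.I) := by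
    unfold kConst; push_cast; ring_nf
  rw [this, Complex.exp_ofReal_mul_I_im]
  exact Real.sin_pos_of_pos_of_lt_pi (by positivity) (by linarith [Real.pi_pos])

theorem im_kConst_mul_sub_ne_zero {d t : ℝ} (ht : t ≠ d) : (kConst * ((d : ℂ) - t)).im ≠ 0 := by
  rw [← Complex.ofReal_sub, Complex.im_mul_ofReal]
  exact mul_ne_zero kConst_im_pos.ne' (sub_ne_zero.2 ht.symm)

theorem hasDerivAt_Ucoef (d : ℝ) (a₀ : ℂ) :
    HasDerivAt (fun η => Ucoef d η a₀)
      (-(kConst ^ 2 / (kConst * Complex.cos (kConst * d) + a₀ * Complex.sin (kConst * d)))) 0 := by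
  have hlin : HasDerivAt (fun w : ℂ => kConst * w) kConst 0 := by
    simpa using (hasDerivAt_id (0 : ℂ)).const_mul kConst
  have hcos := hlin.ccos.const_sub 1
  have := ((hlin.csin.const_mul kConst).add (hcos.const_mul a₀)).div_const
    (kConst * Complex.cos (kConst * d) + a₀ * Complex.sin (kConst * d)) |>.neg
  rw [← Complex.ofReal_zero] at this
  refine HasDerivAt.congr_deriv (f := fun η : ℝ => Ucoef d η a₀) this.comp_ofReal ?_
  simp only [ofReal_zero, mul_zero, cos_zero, one_mul, sin_zero, neg_zero, zero_mul, add_zero,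
    neg_inj]
  ring

theorem isTheta_Ucoef {d : ℝ} {a₀ : ℂ}
    (hk : kConst * Complex.cos (kConst * d) + a₀ * Complex.sin (kConst * d) ≠ 0) :
    (fun η => Ucoef d η a₀) =Θ[𝓝 0] fun η => η := by
  have hne : kConst ≠ 0 := Complex.exp_ne_zero _
  have := (hasDerivAt_Ucoef d a₀).isTheta_sub (by simp [hne, hk])
  simpa [Ucoef] using this

theorem norm_Uouter' (d η : ℝ) (a₀ : ℂ) (t : ℝ) :
    ‖Uouter' d η a₀ t‖ = ‖Ucoef d η a₀ * (kConst * Complex.cos (kConst * ((d : ℂ) - t)))‖ := by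
  rw [Uouter', norm_neg, mul_assoc]

theorem Uouter_norms_order_eta_general (d : ℝ) (hd : 0 < d) (a₀ : ℝ)
    (hk : kConst * Complex.cos (kConst * d) + (a₀ : ℂ) * Complex.sin (kConst * d) ≠ 0) :
    ∃ c C η₀ : ℝ, 0 < c ∧ 0 < C ∧ 0 < η₀ ∧
      ∀ η : ℝ, 0 < η → η < η₀ →
        (c * η ≤ Real.sqrt (∫ t in (3 * η)..d, ‖Uouter d η a₀ t‖ ^ 2) ∧
          Real.sqrt (∫ t in (3 * η)..d, ‖Uouter d η a₀ t‖ ^ 2) ≤ C * η) ∧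
        (c * η ≤ Real.sqrt (∫ t in (3 * η)..d, ‖Uouter' d η a₀ t‖ ^ 2) ∧
          Real.sqrt (∫ t in (3 * η)..d, ‖Uouter' d η a₀ t‖ ^ 2) ≤ C * η) := by
  have h3 : Tendsto (fun η : ℝ => 3 * η) (𝓝 0) (𝓝 0) :=
    (continuous_const_mul 3).tendsto' 0 0 (mul_zero 3)
  have hU := isTheta_sqrt_integral_sq_norm_mul (isTheta_Ucoef hk) h3 (by fun_prop) hd
    (φ := fun t : ℝ => Complex.sin (kConst * ((d : ℂ) - t)))
    fun t ht => Complex.sin_ne_zero_of_im_ne_zero (im_kConst_mul_sub_ne_zero ht.2.ne)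
  have hU' := isTheta_sqrt_integral_sq_norm_mul (isTheta_Ucoef hk) h3 (by fun_prop) hd
    (φ := fun t : ℝ => kConst * Complex.cos (kConst * ((d : ℂ) - t)))
    fun t ht => mul_ne_zero (Complex.exp_ne_zero _)
      (Complex.cos_ne_zero_of_im_ne_zero (im_kConst_mul_sub_ne_zero ht.2.ne))
  obtain ⟨c₁, C₁, hc₁, hC₁, h₁⟩ := (hU.mono (nhdsWithin_le_nhds (s := Ioi 0))).exists_pos_bounds
  obtain ⟨c₂, C₂, hc₂, hC₂, h₂⟩ := (hU'.mono (nhdsWithin_le_nhds (s := Ioi 0))).exists_pos_bounds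
  obtain ⟨η₀, hη₀, hsub⟩ := mem_nhdsGT_iff_exists_Ioo_subset.1 (h₁.and h₂)
  refine ⟨min c₁ c₂, max C₁ C₂, η₀, lt_min hc₁ hc₂, lt_max_of_lt_left hC₁, hη₀,
    fun η hη hηη₀ => ?_⟩
  obtain ⟨⟨l₁, u₁⟩, l₂, u₂⟩ := hsub ⟨hη, hηη₀⟩
  simp only [Real.norm_of_nonneg hη.le, Real.norm_of_nonneg (Real.sqrt_nonneg _)] at l₁ u₁ l₂ u₂
  simp_rw [norm_Uouter']
  exact ⟨⟨(mul_le_mul_of_nonneg_right (min_le_left _ _) hη.le).trans l₁,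
      u₁.trans (mul_le_mul_of_nonneg_right (le_max_left _ _) hη.le)⟩,
    (mul_le_mul_of_nonneg_right (min_le_right _ _) hη.le).trans l₂,
      u₂.trans (mul_le_mul_of_nonneg_right (le_max_right _ _) hη.le)⟩

/-- Both `‖U‖_{L²(3η,d)}` and `‖U'‖_{L²(3η,d)}` are of exact order `η` as `η → 0`. -/
theorem Uouter_norms_order_eta (d : ℝ) (hd : 0 < d) (a₀ : ℝ) (ha₀ : 0 ≤ a₀)
    (hk : kConst * Complex.cos (kConst * d) + (a₀ : ℂ) * Complex.sin (kConst * d) ≠ 0) :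
    ∃ c C η₀ : ℝ, 0 < c ∧ 0 < C ∧ 0 < η₀ ∧
      ∀ η : ℝ, 0 < η → η < η₀ →
        (c * η ≤ Real.sqrt (∫ t in (3 * η)..d, ‖Uouter d η a₀ t‖ ^ 2) ∧
          Real.sqrt (∫ t in (3 * η)..d, ‖Uouter d η a₀ t‖ ^ 2) ≤ C * η) ∧
        (c * η ≤ Real.sqrt (∫ t in (3 * η)..d, ‖Uouter' d η a₀ t‖ ^ 2) ∧
          Real.sqrt (∫ t in (3 * η)..d, ‖Uouter' d η a₀ t‖ ^ 2) ≤ C * η) :=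
  Uouter_norms_order_eta_general d hd a₀ hk
end

section
/- Let d > 0, Ω₀ = ℝ × (0,d), and u ∈ H²(Ω₀) with u = 0 on Γ₀ = {x₂ = 0}. Then for every h ∈ (0, d/2), ∫_ℝ |u(x₁, h)|² dx₁ ≤ C h² ‖u‖²_{H²(Ω₀)} and ∫_ℝ |∇u(x₁, h)|² dx₁ ≤ C ‖u‖²_{H²(Ω₀)}, with C depending only on d. -/
open MeasureTheory Set

/-!
On each vertical line `{x₁} × [0, d]`, the one-dimensional Sobolev embedding `H¹(0, d) ⊂ C[0, d]`
applied to `∇u(x₁, ·)` bounds `|∇u(x₁, t)|²` by `C ∫₀ᵈ (|u|² + |∇u|² + |∇²u|²)(x₁, s) ds` for every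
`t`; since `u(x₁, 0) = 0`, the mean value inequality on `[0, h]` gains the factor `h²` for
`|u(x₁, h)|²`. Integrating these bounds in `x₁` (Fubini) gives both trace estimates.
-/

theorem sq_integral_le_measureReal_mul_integral_sq {α : Type*} [MeasurableSpace α]
    {μ : Measure α} [IsFiniteMeasure μ] {g : α → ℝ} (hg : Integrable g μ)
    (hg2 : Integrable (fun x => g x ^ 2) μ) :
    (∫ x, g x ∂μ) ^ 2 ≤ μ.real univ * ∫ x, g x ^ 2 ∂μ := by
  rcases eq_zero_or_neZero μ with rfl | hμ
  · simp
  set m := μ.real univ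
  set J := ∫ x, g x ∂μ
  set I := ∫ x, g x ^ 2 ∂μ
  have hexpand : ∫ x, (m * g x - J) ^ 2 ∂μ = m * (m * I - J ^ 2) := by
    have hsq : ∀ x, (m * g x - J) ^ 2 = m ^ 2 * g x ^ 2 - 2 * m * J * g x + J ^ 2 :=
      fun x => by ring
    simp_rw [hsq]
    rw [integral_add (f := fun x => m ^ 2 * g x ^ 2 - 2 * m * J * g x)
        ((hg2.const_mul _).sub (hg.const_mul _)) (integrable_const _),
      integral_sub (hg2.const_mul _) (hg.const_mul _), integral_const_mul, integral_const_mul,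
      integral_const, smul_eq_mul]
    ring
  have hnonneg : 0 ≤ m * (m * I - J ^ 2) :=
    hexpand ▸ integral_nonneg fun x => sq_nonneg _
  linarith [(mul_nonneg_iff_of_pos_left measureReal_univ_pos).1 hnonneg]

section OneDimensional

variable {E : Type*} [NormedAddCommGroup E] [NormedSpace ℝ E]

theorem norm_sub_le_setIntegral_norm_deriv [CompleteSpace E] {f f' : ℝ → E} {a b s t : ℝ}
    (hf : ∀ x ∈ Icc a b, HasDerivAt f (f' x) x) (hf' : IntegrableOn f' (Icc a b))
    (hs : s ∈ Icc a b) (ht : t ∈ Icc a b) :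
    ‖f t - f s‖ ≤ ∫ x in Icc a b, ‖f' x‖ := by
  have hsub : uIcc s t ⊆ Icc a b := uIcc_subset_Icc hs ht
  rw [← intervalIntegral.integral_eq_sub_of_hasDerivAt (fun x hx => hf x (hsub hx))
    (hf'.mono_set hsub).intervalIntegrable]
  calc _ ≤ ∫ x in uIoc s t, ‖f' x‖ := intervalIntegral.norm_integral_le_integral_norm_uIoc
    _ ≤ _ := setIntegral_mono_set hf'.norm (ae_of_all _ fun _ => norm_nonneg _)
        (uIoc_subset_uIcc.trans hsub).eventuallyLE

theorem sq_norm_le_mul_setIntegral_of_hasDerivAt [CompleteSpace E] {f f' : ℝ → E} {G : ℝ → ℝ}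
    {a b : ℝ} (hab : a < b) (hf : ∀ x ∈ Icc a b, HasDerivAt f (f' x) x)
    (hG : IntegrableOn G (Icc a b)) (hfG : ∀ x ∈ Icc a b, ‖f x‖ ^ 2 + ‖f' x‖ ^ 2 ≤ G x)
    {t : ℝ} (ht : t ∈ Icc a b) :
    ‖f t‖ ^ 2 ≤ (2 / (b - a) + 2 * (b - a)) * ∫ x in Icc a b, G x := by
  set L := b - a
  have hL : 0 < L := sub_pos.2 hab
  have hvol : volume.real (Icc a b) = L := Real.volume_real_Icc_of_le hab.le
  have hfm : AEStronglyMeasurable f (volume.restrict (Icc a b)) :=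
    ContinuousOn.aestronglyMeasurable (fun x hx => (hf x hx).continuousAt.continuousWithinAt)
      measurableSet_Icc
  have hf'm : AEStronglyMeasurable f' (volume.restrict (Icc a b)) :=
    (stronglyMeasurable_deriv f).aestronglyMeasurable.congr
      (ae_restrict_of_forall_mem measurableSet_Icc fun x hx => (hf x hx).deriv)
  have hf2 : IntegrableOn (fun x => ‖f x‖ ^ 2) (Icc a b) :=
    hG.mono' (hfm.norm.pow 2) <| ae_restrict_of_forall_mem measurableSet_Icc fun x hx => by
      rw [Real.norm_of_nonneg (by positivity)]; linarith [hfG x hx, sq_nonneg ‖f' x‖]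
  have hf'2 : IntegrableOn (fun x => ‖f' x‖ ^ 2) (Icc a b) :=
    hG.mono' (hf'm.norm.pow 2) <| ae_restrict_of_forall_mem measurableSet_Icc fun x hx => by
      rw [Real.norm_of_nonneg (by positivity)]; linarith [hfG x hx, sq_nonneg ‖f x‖]
  have hf'1 : IntegrableOn (fun x => ‖f' x‖) (Icc a b) :=
    ((memLp_two_iff_integrable_sq hf'm.norm).2 hf'2).integrable one_le_two
  set P := ∫ x in Icc a b, ‖f x‖ ^ 2
  set Q := ∫ x in Icc a b, ‖f' x‖ ^ 2
  set J := ∫ x in Icc a b, ‖f' x‖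
  obtain ⟨s, hs, hfs⟩ := exists_le_setAverage (by simp [hab]) (by simp) hf2
  rw [setAverage_eq, hvol, smul_eq_mul] at hfs
  change ‖f s‖ ^ 2 ≤ L⁻¹ * P at hfs
  have hJ : J ^ 2 ≤ L * Q := by
    simpa [measureReal_restrict_apply_univ, hvol] using
      sq_integral_le_measureReal_mul_integral_sq hf'1 hf'2
  have hts : ‖f t‖ ≤ ‖f s‖ + J := by
    linarith [norm_sub_norm_le (f t) (f s),
      norm_sub_le_setIntegral_norm_deriv hf ((integrable_norm_iff hf'm).1 hf'1) hs ht]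
  have hPQ : P + Q ≤ ∫ x in Icc a b, G x := by
    rw [← integral_add hf2 hf'2]
    exact setIntegral_mono_on (hf2.add hf'2) hG measurableSet_Icc hfG
  have hP : 0 ≤ P := integral_nonneg fun _ => by positivity
  have hQ : 0 ≤ Q := integral_nonneg fun _ => by positivity
  calc ‖f t‖ ^ 2 ≤ 2 * ‖f s‖ ^ 2 + 2 * J ^ 2 := by
        nlinarith [norm_nonneg (f t), sq_nonneg (‖f s‖ - J)]
    _ ≤ 2 / L * P + 2 * L * Q := by
        rw [div_eq_mul_inv, mul_assoc]
        linarith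
    _ ≤ (2 / L + 2 * L) * (P + Q) := by nlinarith [div_pos two_pos hL]
    _ ≤ (2 / L + 2 * L) * ∫ x in Icc a b, G x := by gcongr

theorem sq_norm_le_mul_sq_of_sq_norm_deriv_le {φ φ' : ℝ → E} {h K : ℝ} (hh : 0 ≤ h)
    (hφ : ∀ t ∈ Icc 0 h, HasDerivAt φ (φ' t) t) (hφ0 : φ 0 = 0)
    (hK : ∀ t ∈ Ico 0 h, ‖φ' t‖ ^ 2 ≤ K) :
    ‖φ h‖ ^ 2 ≤ K * h ^ 2 := by
  rcases hh.eq_or_lt with rfl | hpos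
  · simp [hφ0]
  have hK0 : 0 ≤ K := (sq_nonneg _).trans (hK 0 ⟨le_rfl, hpos⟩)
  have hmvt := norm_image_sub_le_of_norm_deriv_le_segment' (C := √K)
    (fun t ht => (hφ t ht).hasDerivWithinAt)
    (fun t ht => (abs_norm (φ' t)).symm.le.trans (Real.abs_le_sqrt (hK t ht))) h ⟨hh, le_rfl⟩
  rw [hφ0, sub_zero, sub_zero] at hmvt
  calc ‖φ h‖ ^ 2 ≤ (√K * h) ^ 2 := by gcongr
    _ = K * h ^ 2 := by rw [mul_pow, Real.sq_sqrt hK0]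

end OneDimensional

section Slices

variable {α β E : Type*} [MeasurableSpace α] [MeasurableSpace β] {μ : Measure α} {ν : Measure β}
  [SFinite μ] [SFinite ν] [NormedAddCommGroup E] {f : α × β → E} {t : Set β}

theorem MeasureTheory.IntegrableOn.ae_integrableOn_slice
    (hf : IntegrableOn f (univ ×ˢ t) (μ.prod ν)) :
    ∀ᵐ x ∂μ, IntegrableOn (fun y => f (x, y)) t ν := by
  rw [IntegrableOn, ← Measure.prod_restrict, Measure.restrict_univ] at hf
  exact hf.prod_right_ae

theorem MeasureTheory.IntegrableOn.integrable_setIntegral_slice [NormedSpace ℝ E]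
    (hf : IntegrableOn f (univ ×ˢ t) (μ.prod ν)) :
    Integrable (fun x => ∫ y in t, f (x, y) ∂ν) μ := by
  rw [IntegrableOn, ← Measure.prod_restrict, Measure.restrict_univ] at hf
  exact hf.integral_prod_left

theorem setIntegral_univ_prod [NormedSpace ℝ E] (hf : IntegrableOn f (univ ×ˢ t) (μ.prod ν)) :
    ∫ z in univ ×ˢ t, f z ∂μ.prod ν = ∫ x, ∫ y in t, f (x, y) ∂ν ∂μ := by
  rw [setIntegral_prod f hf, Measure.restrict_univ]

end Slices

theorem integral_le_mul_integral_of_ae_le {α : Type*} [MeasurableSpace α] {μ : Measure α}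
    {g A : α → ℝ} {c : ℝ} (hA : Integrable A μ) (hg : 0 ≤ᵐ[μ] g)
    (hgA : ∀ᵐ x ∂μ, g x ≤ c * A x) :
    ∫ x, g x ∂μ ≤ c * ∫ x, A x ∂μ := by
  rw [← integral_const_mul]
  exact integral_mono_of_nonneg hg (hA.const_mul c) hgA

section VerticalLines

variable {E F : Type*} [NormedAddCommGroup E] [NormedSpace ℝ E] [NormedAddCommGroup F]
  [NormedSpace ℝ F]

theorem HasFDerivAt.hasDerivAt_vertical {g : E × ℝ → F} {L : E × ℝ →L[ℝ] F} {x₁ : E} {t : ℝ}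
    (hg : HasFDerivAt g L (x₁, t)) : HasDerivAt (fun s => g (x₁, s)) (L (0, 1)) t :=
  hg.comp_hasDerivAt t ((hasDerivAt_const t x₁).prodMk (hasDerivAt_id t))

theorem ContinuousLinearMap.norm_apply_zero_one_le (L : E × ℝ →L[ℝ] F) : ‖L (0, 1)‖ ≤ ‖L‖ := by
  simpa [Prod.norm_def] using L.le_opNorm (0, 1)

noncomputable def h2Density (u : E × ℝ → F) (Du : E × ℝ → E × ℝ →L[ℝ] F)
    (D2u : E × ℝ → E × ℝ →L[ℝ] E × ℝ →L[ℝ] F) (x : E × ℝ) : ℝ :=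
  ‖u x‖ ^ 2 + ‖Du x‖ ^ 2 + ‖D2u x‖ ^ 2

theorem sq_norm_le_setIntegral_h2Density_slice [CompleteSpace F] {u : E × ℝ → F}
    {Du : E × ℝ → E × ℝ →L[ℝ] F} {D2u : E × ℝ → E × ℝ →L[ℝ] E × ℝ →L[ℝ] F}
    (hu : ∀ x, HasFDerivAt u (Du x) x) (hDu : ∀ x, HasFDerivAt Du (D2u x) x) {x₁ : E}
    (hu0 : u (x₁, 0) = 0) {d : ℝ} (hd : 0 < d)
    (hint : IntegrableOn (fun t => h2Density u Du D2u (x₁, t)) (Ioo 0 d))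
    {h : ℝ} (hh : h ∈ Icc 0 d) :
    ‖u (x₁, h)‖ ^ 2 ≤ (2 / d + 2 * d) * h ^ 2 * ∫ t in Ioo 0 d, h2Density u Du D2u (x₁, t) ∧
      ‖Du (x₁, h)‖ ^ 2 ≤ (2 / d + 2 * d) * ∫ t in Ioo 0 d, h2Density u Du D2u (x₁, t) := by
  set A := ∫ t in Ioo 0 d, h2Density u Du D2u (x₁, t)
  have hdom : ∀ s, ‖Du (x₁, s)‖ ^ 2 + ‖D2u (x₁, s) (0, 1)‖ ^ 2 ≤ h2Density u Du D2u (x₁, s) := by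
    intro s
    have := pow_le_pow_left₀ (norm_nonneg _) (D2u (x₁, s)).norm_apply_zero_one_le 2
    simp only [h2Density]
    linarith [sq_nonneg ‖u (x₁, s)‖]
  have hDu_le : ∀ t ∈ Icc 0 d, ‖Du (x₁, t)‖ ^ 2 ≤ (2 / d + 2 * d) * A := by
    intro t ht
    simpa [integral_Icc_eq_integral_Ioo] using
      sq_norm_le_mul_setIntegral_of_hasDerivAt hd
        (fun s _ => (hDu (x₁, s)).hasDerivAt_vertical)
        ((integrableOn_Icc_iff_integrableOn_Ioo (a := 0) (b := d)).2 hint) (fun s _ => hdom s) ht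
  refine ⟨?_, hDu_le h hh⟩
  have hu_le := sq_norm_le_mul_sq_of_sq_norm_deriv_le hh.1
    (fun t _ => (hu (x₁, t)).hasDerivAt_vertical) hu0 (K := (2 / d + 2 * d) * A)
    fun t ht => (pow_le_pow_left₀ (norm_nonneg _) (Du (x₁, t)).norm_apply_zero_one_le 2).trans
      (hDu_le t ⟨ht.1, ht.2.le.trans hh.2⟩)
  linarith

end VerticalLines

/-- Trace estimates on horizontal lines `{x₂ = h}` for `u ∈ H²(Ω₀)`, `Ω₀ = ℝ × (0,d)`,
vanishing on `Γ₀ = {x₂ = 0}`: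
`∫_ℝ |u(x₁,h)|² ≤ C h² ‖u‖²_{H²(Ω₀)}` and `∫_ℝ |∇u(x₁,h)|² ≤ C ‖u‖²_{H²(Ω₀)}`. -/
theorem horizontal_trace_estimates (d : ℝ) (hd : 0 < d) :
    ∃ C > (0 : ℝ), ∀ (u : ℝ × ℝ → ℂ) (Du : ℝ × ℝ → (ℝ × ℝ) →L[ℝ] ℂ)
      (D2u : ℝ × ℝ → (ℝ × ℝ) →L[ℝ] ((ℝ × ℝ) →L[ℝ] ℂ)),
      (∀ x, HasFDerivAt u (Du x) x) →
      (∀ x, HasFDerivAt Du (D2u x) x) →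
      (∀ x₁ : ℝ, u (x₁, 0) = 0) →
      IntegrableOn (fun x => ‖u x‖ ^ 2 + ‖Du x‖ ^ 2 + ‖D2u x‖ ^ 2)
        (Set.univ ×ˢ Set.Ioo (0 : ℝ) d) →
      ∀ h ∈ Set.Ioo (0 : ℝ) (d / 2),
        (∫ x₁ : ℝ, ‖u (x₁, h)‖ ^ 2) ≤
          C * h ^ 2 * ∫ x in Set.univ ×ˢ Set.Ioo (0 : ℝ) d,
            (‖u x‖ ^ 2 + ‖Du x‖ ^ 2 + ‖D2u x‖ ^ 2) ∧
        (∫ x₁ : ℝ, ‖Du (x₁, h)‖ ^ 2) ≤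
          C * ∫ x in Set.univ ×ˢ Set.Ioo (0 : ℝ) d,
            (‖u x‖ ^ 2 + ‖Du x‖ ^ 2 + ‖D2u x‖ ^ 2) := by
  refine ⟨2 / d + 2 * d, by positivity, fun u Du D2u hu hDu hu0 hint h hh => ?_⟩
  have hF : IntegrableOn (h2Density u Du D2u) (univ ×ˢ Ioo 0 d) (volume.prod volume) := hint
  have hbounds := hF.ae_integrableOn_slice.mono fun x₁ hx₁ =>
    sq_norm_le_setIntegral_h2Density_slice hu hDu (hu0 x₁) hd hx₁ ⟨hh.1.le, by linarith [hh.2]⟩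
  have hA := hF.integrable_setIntegral_slice
  have hfubini : ∫ x in univ ×ˢ Ioo 0 d, (‖u x‖ ^ 2 + ‖Du x‖ ^ 2 + ‖D2u x‖ ^ 2) =
      ∫ x₁, ∫ t in Ioo 0 d, h2Density u Du D2u (x₁, t) :=
    setIntegral_univ_prod hF
  rw [hfubini]
  exact ⟨integral_le_mul_integral_of_ae_le hA (ae_of_all _ fun _ => by positivity)
      (hbounds.mono fun _ hx => hx.1),
    integral_le_mul_integral_of_ae_le hA (ae_of_all _ fun _ => by positivity)
      (hbounds.mono fun _ hx => hx.2)⟩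
end
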